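/- arXiv:2602.13759 — 2 statements merged into one kernel-verified Lean document; each statement's English description precedes it below -/
import Mathlib

section
/- Fix n ≥ 1 and a symmetric matrix C_e ∈ ℝ^{n×n}. For all orthogonal matrices M and N, ‖M·Ω(M) − N·Ω(N)‖_F ≤ (2√n + 8)·‖C_e‖₂²·‖M − N‖_F, where Ω(M) := A(M)D(M) − D(M)A(M) with A(M) = Mᵀ C_e M and D(M) = diag(A(M)). That is, the Riemannian gradient map M ↦ −M Ω(M) of the diagonalization objective is Lipschitz on the orthogonal group with constant c_n ‖C_e‖₂², c_n = 2√n + 8. -/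
open Matrix

/-- The diagonal matrix whose diagonal agrees with `X`. -/
noncomputable def diagPart {n : ℕ} (X : Matrix (Fin n) (Fin n) ℝ) :
    Matrix (Fin n) (Fin n) ℝ :=
  Matrix.diagonal (fun i => X i i)

/-- Frobenius norm of a real square matrix. -/
noncomputable def frobNorm {n : ℕ} (X : Matrix (Fin n) (Fin n) ℝ) : ℝ :=
  Real.sqrt (∑ i, ∑ j, (X i j) ^ 2)

/-- Spectral (ℓ²-operator) norm of a real square matrix. -/
noncomputable def specNorm {n : ℕ} (X : Matrix (Fin n) (Fin n) ℝ) : ℝ :=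
  ‖LinearMap.toContinuousLinearMap (Matrix.toEuclideanLin X)‖

/-- Rotated covariance `A(M) = Mᵀ C_e M`. -/
noncomputable def rotA {n : ℕ} (Ce M : Matrix (Fin n) (Fin n) ℝ) :
    Matrix (Fin n) (Fin n) ℝ := Mᵀ * Ce * M

/-- The commutator generator `Ω(M) = A D − D A`. -/
noncomputable def genOmega {n : ℕ} (Ce M : Matrix (Fin n) (Fin n) ℝ) :
    Matrix (Fin n) (Fin n) ℝ :=
  rotA Ce M * diagPart (rotA Ce M) - diagPart (rotA Ce M) * rotA Ce M

/-!
Orthogonal matrices have spectral norm at most one, so `A = MᵀCₑM`, `B = NᵀCₑN` and their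
diagonal parts all have spectral norm at most `‖Cₑ‖₂`. Combining the mixed bounds
`‖XY‖_F ≤ ‖X‖₂ ‖Y‖_F` and `‖XY‖_F ≤ ‖X‖_F ‖Y‖₂` with `XY − X'Y' = (X − X')Y + X'(Y − Y')` gives
successively `‖A − B‖_F ≤ 2‖Cₑ‖₂ ‖M − N‖_F`, `‖Ω(M) − Ω(N)‖_F ≤ 4‖Cₑ‖₂ ‖A − B‖_F`, and
`‖MΩ(M) − NΩ(N)‖_F ≤ ‖M − N‖_F ‖Ω(M)‖₂ + ‖Ω(M) − Ω(N)‖_F ≤ 10 ‖Cₑ‖₂² ‖M − N‖_F`;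
finally `10 ≤ 2√n + 8` as soon as `n ≥ 1`.
-/

variable {n : ℕ}

section SpecNorm

open scoped Matrix.Norms.L2Operator

lemma specNorm_eq_norm (X : Matrix (Fin n) (Fin n) ℝ) : specNorm X = ‖X‖ := rfl

lemma specNorm_nonneg (X : Matrix (Fin n) (Fin n) ℝ) : 0 ≤ specNorm X := norm_nonneg X

lemma specNorm_sub_le (X Y : Matrix (Fin n) (Fin n) ℝ) :
    specNorm (X - Y) ≤ specNorm X + specNorm Y :=
  norm_sub_le X Y

lemma specNorm_mul_le (X Y : Matrix (Fin n) (Fin n) ℝ) :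
    specNorm (X * Y) ≤ specNorm X * specNorm Y :=
  l2_opNorm_mul X Y

lemma specNorm_transpose (X : Matrix (Fin n) (Fin n) ℝ) : specNorm Xᵀ = specNorm X := by
  rw [← conjTranspose_eq_transpose_of_trivial]
  exact l2_opNorm_conjTranspose X

lemma norm_mulVec_le_specNorm_mul (X : Matrix (Fin n) (Fin n) ℝ)
    (v : EuclideanSpace ℝ (Fin n)) :
    ‖WithLp.toLp 2 (X *ᵥ v)‖ ≤ specNorm X * ‖v‖ :=
  l2_opNorm_mulVec X v

lemma specNorm_le_one_of_transpose_mul_self {M : Matrix (Fin n) (Fin n) ℝ} (hM : Mᵀ * M = 1) :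
    specNorm M ≤ 1 := by
  have h := l2_opNorm_conjTranspose_mul_self M
  rw [conjTranspose_eq_transpose_of_trivial, hM] at h
  have h1 : ‖(1 : Matrix (Fin n) (Fin n) ℝ)‖ ≤ 1 := by
    rw [cstar_norm_def, map_one]
    exact ContinuousLinearMap.norm_id_le
  rw [specNorm_eq_norm]
  nlinarith [norm_nonneg M]

lemma abs_apply_self_le_specNorm (X : Matrix (Fin n) (Fin n) ℝ) (i : Fin n) :
    |X i i| ≤ specNorm X := by
  let e : EuclideanSpace ℝ (Fin n) := PiLp.single 2 i 1
  calc |X i i| = ‖(WithLp.toLp 2 (X *ᵥ e) : EuclideanSpace ℝ (Fin n)) i‖ := by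
        rw [Real.norm_eq_abs, PiLp.ofLp_single, mulVec_single_one]; rfl
    _ ≤ ‖WithLp.toLp 2 (X *ᵥ e)‖ := PiLp.norm_apply_le _ i
    _ ≤ specNorm X * ‖e‖ := norm_mulVec_le_specNorm_mul X e
    _ = specNorm X := by rw [PiLp.norm_single, norm_one, mul_one]

lemma specNorm_diagPart_le (X : Matrix (Fin n) (Fin n) ℝ) :
    specNorm (diagPart X) ≤ specNorm X := by
  rw [specNorm_eq_norm, diagPart, l2_opNorm_diagonal,
    pi_norm_le_iff_of_nonneg (specNorm_nonneg X)]
  exact abs_apply_self_le_specNorm X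

end SpecNorm

lemma specNorm_rotA_le (Ce : Matrix (Fin n) (Fin n) ℝ) {M : Matrix (Fin n) (Fin n) ℝ}
    (hM : Mᵀ * M = 1) : specNorm (rotA Ce M) ≤ specNorm Ce := by
  have hM₁ := specNorm_le_one_of_transpose_mul_self hM
  have hMt : specNorm Mᵀ ≤ 1 := specNorm_transpose M ▸ hM₁
  calc specNorm (Mᵀ * Ce * M) ≤ specNorm (Mᵀ * Ce) * specNorm M := specNorm_mul_le _ _
    _ ≤ specNorm (Mᵀ * Ce) := mul_le_of_le_one_right (specNorm_nonneg _) hM₁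
    _ ≤ specNorm Mᵀ * specNorm Ce := specNorm_mul_le _ _
    _ ≤ specNorm Ce := mul_le_of_le_one_left (specNorm_nonneg _) hMt

lemma specNorm_commutator_diagPart_le (X : Matrix (Fin n) (Fin n) ℝ) :
    specNorm (X * diagPart X - diagPart X * X) ≤ 2 * specNorm X ^ 2 := by
  have hD := specNorm_diagPart_le X
  have hX := specNorm_nonneg X
  calc specNorm (X * diagPart X - diagPart X * X)
      ≤ specNorm X * specNorm (diagPart X) + specNorm (diagPart X) * specNorm X :=
        (specNorm_sub_le _ _).trans (add_le_add (specNorm_mul_le _ _) (specNorm_mul_le _ _))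
    _ ≤ specNorm X * specNorm X + specNorm X * specNorm X := by gcongr
    _ = 2 * specNorm X ^ 2 := by ring

section FrobNorm

attribute [local instance] Matrix.frobeniusNormedAddCommGroup

lemma frobNorm_eq_norm (X : Matrix (Fin n) (Fin n) ℝ) : frobNorm X = ‖X‖ := by
  simp only [frobNorm, frobenius_norm_def, Real.rpow_two, Real.norm_eq_abs, sq_abs,
    Real.sqrt_eq_rpow, one_div]

lemma frobNorm_nonneg (X : Matrix (Fin n) (Fin n) ℝ) : 0 ≤ frobNorm X := Real.sqrt_nonneg _

lemma frobNorm_add_le (X Y : Matrix (Fin n) (Fin n) ℝ) :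
    frobNorm (X + Y) ≤ frobNorm X + frobNorm Y := by
  simpa only [frobNorm_eq_norm] using norm_add_le X Y

lemma frobNorm_sub_le (X Y : Matrix (Fin n) (Fin n) ℝ) :
    frobNorm (X - Y) ≤ frobNorm X + frobNorm Y := by
  simpa only [frobNorm_eq_norm] using norm_sub_le X Y

end FrobNorm

lemma frobNorm_transpose (X : Matrix (Fin n) (Fin n) ℝ) : frobNorm Xᵀ = frobNorm X := by
  rw [frobNorm, frobNorm, Finset.sum_comm]
  rfl

lemma sq_frobNorm_eq_sum_norm_col (X : Matrix (Fin n) (Fin n) ℝ) :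
    frobNorm X ^ 2 = ∑ j, ‖(WithLp.toLp 2 (fun i ↦ X i j) : EuclideanSpace ℝ (Fin n))‖ ^ 2 := by
  simp only [frobNorm, EuclideanSpace.norm_sq_eq, Real.norm_eq_abs, sq_abs]
  rw [Real.sq_sqrt (by positivity), Finset.sum_comm]

lemma frobNorm_mul_le_specNorm_mul (X Y : Matrix (Fin n) (Fin n) ℝ) :
    frobNorm (X * Y) ≤ specNorm X * frobNorm Y := by
  refine (sq_le_sq₀ (frobNorm_nonneg _)
    (mul_nonneg (specNorm_nonneg X) (frobNorm_nonneg Y))).mp ?_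
  rw [mul_pow, sq_frobNorm_eq_sum_norm_col, sq_frobNorm_eq_sum_norm_col, Finset.mul_sum]
  refine Finset.sum_le_sum fun j _ ↦ ?_
  have hcol : (fun i ↦ (X * Y) i j) = X *ᵥ fun i ↦ Y i j := by
    ext i
    simp [mul_apply, mulVec, dotProduct]
  rw [hcol, ← mul_pow]
  gcongr
  exact norm_mulVec_le_specNorm_mul X (WithLp.toLp 2 fun i ↦ Y i j)

lemma frobNorm_mul_le_mul_specNorm (X Y : Matrix (Fin n) (Fin n) ℝ) :
    frobNorm (X * Y) ≤ frobNorm X * specNorm Y := by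
  rw [← frobNorm_transpose, transpose_mul, mul_comm, ← frobNorm_transpose X,
    ← specNorm_transpose Y]
  exact frobNorm_mul_le_specNorm_mul Yᵀ Xᵀ

lemma frobNorm_diagPart_le (X : Matrix (Fin n) (Fin n) ℝ) :
    frobNorm (diagPart X) ≤ frobNorm X := by
  refine Real.sqrt_le_sqrt (Finset.sum_le_sum fun i _ ↦ ?_)
  have hrow : ∑ j, diagPart X i j ^ 2 = X i i ^ 2 := by
    simp [diagPart, diagonal_apply, apply_ite (· ^ 2)]
  rw [hrow]
  exact Finset.single_le_sum (f := fun j ↦ X i j ^ 2) (fun j _ ↦ sq_nonneg _) (Finset.mem_univ i)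

lemma diagPart_sub (X Y : Matrix (Fin n) (Fin n) ℝ) :
    diagPart (X - Y) = diagPart X - diagPart Y :=
  (diagonal_sub _ _).symm

lemma frobNorm_mul_sub_mul_le (X X' Y Y' : Matrix (Fin n) (Fin n) ℝ) :
    frobNorm (X * Y - X' * Y')
      ≤ frobNorm (X - X') * specNorm Y + specNorm X' * frobNorm (Y - Y') := by
  have h : X * Y - X' * Y' = (X - X') * Y + X' * (Y - Y') := by noncomm_ring
  rw [h]
  exact (frobNorm_add_le _ _).trans
    (add_le_add (frobNorm_mul_le_mul_specNorm _ _) (frobNorm_mul_le_specNorm_mul _ _))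

lemma frobNorm_rotA_sub_le (Ce : Matrix (Fin n) (Fin n) ℝ) {M N : Matrix (Fin n) (Fin n) ℝ}
    (hM : Mᵀ * M = 1) (hN : Nᵀ * N = 1) :
    frobNorm (rotA Ce M - rotA Ce N) ≤ 2 * specNorm Ce * frobNorm (M - N) := by
  have hCeM : specNorm (Ce * M) ≤ specNorm Ce :=
    (specNorm_mul_le Ce M).trans (mul_le_of_le_one_right (specNorm_nonneg Ce)
      (specNorm_le_one_of_transpose_mul_self hM))
  have hNt : specNorm Nᵀ ≤ 1 := (specNorm_transpose N).trans_le
    (specNorm_le_one_of_transpose_mul_self hN)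
  have hCeMN : frobNorm (Ce * M - Ce * N) ≤ specNorm Ce * frobNorm (M - N) := by
    rw [← mul_sub]
    exact frobNorm_mul_le_specNorm_mul Ce (M - N)
  rw [rotA, rotA, Matrix.mul_assoc, Matrix.mul_assoc]
  calc frobNorm (Mᵀ * (Ce * M) - Nᵀ * (Ce * N))
      ≤ frobNorm (Mᵀ - Nᵀ) * specNorm (Ce * M) + specNorm Nᵀ * frobNorm (Ce * M - Ce * N) :=
        frobNorm_mul_sub_mul_le _ _ _ _
    _ ≤ frobNorm (M - N) * specNorm Ce + 1 * (specNorm Ce * frobNorm (M - N)) := by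
        rw [← transpose_sub, frobNorm_transpose]
        gcongr
        exacts [frobNorm_nonneg _, frobNorm_nonneg _]
    _ = 2 * specNorm Ce * frobNorm (M - N) := by ring

lemma frobNorm_commutator_diagPart_sub_le {X Y : Matrix (Fin n) (Fin n) ℝ} {s : ℝ}
    (hX : specNorm X ≤ s) (hY : specNorm Y ≤ s) :
    frobNorm ((X * diagPart X - diagPart X * X) - (Y * diagPart Y - diagPart Y * Y))
      ≤ 4 * s * frobNorm (X - Y) := by
  have hDX := (specNorm_diagPart_le X).trans hX
  have hDY := (specNorm_diagPart_le Y).trans hY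
  have hDXY : frobNorm (diagPart X - diagPart Y) ≤ frobNorm (X - Y) :=
    diagPart_sub X Y ▸ frobNorm_diagPart_le (X - Y)
  have hs : 0 ≤ s := (specNorm_nonneg X).trans hX
  have h₀ := frobNorm_nonneg (X - Y)
  have hXD : frobNorm (X * diagPart X - Y * diagPart Y)
      ≤ frobNorm (X - Y) * s + s * frobNorm (X - Y) :=
    (frobNorm_mul_sub_mul_le _ _ _ _).trans (by gcongr; exact frobNorm_nonneg _)
  have hDX' : frobNorm (diagPart X * X - diagPart Y * Y)
      ≤ frobNorm (X - Y) * s + s * frobNorm (X - Y) :=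
    (frobNorm_mul_sub_mul_le _ _ _ _).trans (by gcongr; exact specNorm_nonneg _)
  calc _ = frobNorm ((X * diagPart X - Y * diagPart Y) - (diagPart X * X - diagPart Y * Y)) := by
        congr 1; noncomm_ring
    _ ≤ (frobNorm (X - Y) * s + s * frobNorm (X - Y))
        + (frobNorm (X - Y) * s + s * frobNorm (X - Y)) :=
        (frobNorm_sub_le _ _).trans (add_le_add hXD hDX')
    _ = 4 * s * frobNorm (X - Y) := by ring

lemma specNorm_genOmega_le (Ce : Matrix (Fin n) (Fin n) ℝ) {M : Matrix (Fin n) (Fin n) ℝ}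
    (hM : Mᵀ * M = 1) : specNorm (genOmega Ce M) ≤ 2 * specNorm Ce ^ 2 :=
  (specNorm_commutator_diagPart_le (rotA Ce M)).trans (by
    gcongr
    exacts [specNorm_nonneg _, specNorm_rotA_le Ce hM])

lemma frobNorm_genOmega_sub_le (Ce : Matrix (Fin n) (Fin n) ℝ) {M N : Matrix (Fin n) (Fin n) ℝ}
    (hM : Mᵀ * M = 1) (hN : Nᵀ * N = 1) :
    frobNorm (genOmega Ce M - genOmega Ce N) ≤ 8 * specNorm Ce ^ 2 * frobNorm (M - N) :=
  calc frobNorm (genOmega Ce M - genOmega Ce N)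
      ≤ 4 * specNorm Ce * frobNorm (rotA Ce M - rotA Ce N) :=
        frobNorm_commutator_diagPart_sub_le (specNorm_rotA_le Ce hM) (specNorm_rotA_le Ce hN)
    _ ≤ 4 * specNorm Ce * (2 * specNorm Ce * frobNorm (M - N)) := by
        have := specNorm_nonneg Ce
        gcongr
        exact frobNorm_rotA_sub_le Ce hM hN
    _ = 8 * specNorm Ce ^ 2 * frobNorm (M - N) := by ring

theorem riemannian_gradient_lipschitz_general {n : ℕ} (hn : 1 ≤ n)
    (Ce M N : Matrix (Fin n) (Fin n) ℝ)
    (hM : Mᵀ * M = 1) (hN : Nᵀ * N = 1) :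
    frobNorm (M * genOmega Ce M - N * genOmega Ce N)
      ≤ (2 * Real.sqrt n + 8) * specNorm Ce ^ 2 * frobNorm (M - N) := by
  have hsqrt : 1 ≤ Real.sqrt n := Real.one_le_sqrt.mpr (by exact_mod_cast hn)
  have hf := frobNorm_nonneg (M - N)
  calc frobNorm (M * genOmega Ce M - N * genOmega Ce N)
      ≤ frobNorm (M - N) * specNorm (genOmega Ce M)
        + specNorm N * frobNorm (genOmega Ce M - genOmega Ce N) :=
        frobNorm_mul_sub_mul_le _ _ _ _
    _ ≤ frobNorm (M - N) * (2 * specNorm Ce ^ 2)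
        + 1 * (8 * specNorm Ce ^ 2 * frobNorm (M - N)) := by
        gcongr
        exacts [specNorm_genOmega_le Ce hM,
          frobNorm_nonneg _, specNorm_le_one_of_transpose_mul_self hN,
          frobNorm_genOmega_sub_le Ce hM hN]
    _ ≤ (2 * Real.sqrt n + 8) * specNorm Ce ^ 2 * frobNorm (M - N) := by
        nlinarith [mul_nonneg (sq_nonneg (specNorm Ce)) hf]

/-- **Lipschitz bound for the Riemannian gradient map**: for orthogonal `M, N`,
`‖M Ω(M) − N Ω(N)‖_F ≤ (2√n + 8) ‖C_e‖₂² ‖M − N‖_F`. -/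
theorem riemannian_gradient_lipschitz {n : ℕ} (hn : 1 ≤ n)
    (Ce M N : Matrix (Fin n) (Fin n) ℝ) (hCe : Ceᵀ = Ce)
    (hM : Mᵀ * M = 1) (hN : Nᵀ * N = 1) :
    frobNorm (M * genOmega Ce M - N * genOmega Ce N)
      ≤ (2 * Real.sqrt n + 8) * specNorm Ce ^ 2 * frobNorm (M - N) :=
  riemannian_gradient_lipschitz_general hn Ce M N hM hN
end

section
/- Fix n ≥ 2 and a symmetric matrix C_e ∈ ℝ^{n×n}. Let M be orthogonal with A := Mᵀ C_e M, and suppose indices i ≠ j satisfy A_{ii} = A_{jj}, with b := A_{ij}. Let Ξ := E_{ij} − E_{ji} be the skew-symmetric matrix with (i,j) entry 1, (j,i) entry −1 and all other entries 0. Then for every real t: f(M·exp(tΞ)) = f(M) − b²·sin²(2t). In particular, taking t = π/4 decreases f by exactly b², and d²/dt²|_{t=0} f(M exp(tΞ)) = −8b². -/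
open Matrix Real

/-- The diagonalization objective `f(M) = (1/2)‖off(A(M))‖_F²`. -/
noncomputable def objF {n : ℕ} (Ce M : Matrix (Fin n) (Fin n) ℝ) : ℝ :=
  (1 / 2) * frobNorm (rotA Ce M - diagPart (rotA Ce M)) ^ 2

/-!
Since `Ξ³ = -Ξ`, the exponential series of `tΞ` collapses to
`exp (tΞ) = 1 + sin t • Ξ + (1 - cos t) • Ξ²`, the rotation by `t` in the `(i, j)`-plane; it is
orthogonal because `Ξ` is skew. Conjugation by an orthogonal matrix preserves `‖A‖_F`, and
`f = (‖A‖_F² - ∑ₖ A_kk²) / 2`, so only the diagonal matters, and the rotation moves only `A_ii`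
and `A_jj`. When both equal `a` they become `a ∓ b sin 2t`, raising `∑ₖ A_kk²` by
`2 b² sin² 2t`. Writing `sin² 2t = (1 - cos 4t) / 2` gives the second derivative.
-/

section Rodrigues

variable {A : Type*} [NormedRing A] [NormedAlgebra ℝ A] [CompleteSpace A] {X : A}

theorem exp_smul_of_pow_three_eq_neg (hX : X ^ 3 = -X) (t : ℝ) :
    NormedSpace.exp (t • X) = 1 + sin t • X + (1 - cos t) • X ^ 2 := by
  have hodd (k : ℕ) : X ^ (2 * k + 1) = (-1 : ℝ) ^ k • X := by
    induction k with
    | zero => simp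
    | succ k ih =>
      rw [show 2 * (k + 1) + 1 = 2 * k + 1 + 2 by ring, pow_add, ih, smul_mul_assoc,
        ← pow_succ', hX, pow_succ, mul_neg_one, neg_smul, smul_neg]
  have heven (k : ℕ) : X ^ (2 * k + 2) = (-1 : ℝ) ^ k • X ^ 2 := by
    rw [pow_succ, hodd, smul_mul_assoc, ← sq]
  have hsplit : 1 + sin t • X + (1 - cos t) • X ^ 2
      = (cos t • -X ^ 2 + (1 + X ^ 2)) + sin t • X := by module
  rw [hsplit]
  refine (NormedSpace.exp_series_hasSum_exp' (𝕂 := ℝ) (t • X)).unique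
    (HasSum.even_add_odd ?_ ?_)
  -- `X ^ (2 * k) = (-1) ^ k • -X ^ 2` except at `k = 0`, corrected by the single term `1 + X ^ 2`
  · convert ((Real.hasSum_cos t).smul_const (-X ^ 2)).add (hasSum_ite_eq 0 (1 + X ^ 2)) using 1
    ext (_ | k)
    · simp
    · simp only [smul_pow, mul_add, mul_one, heven, smul_smul]
      rw [if_neg k.succ_ne_zero, add_zero]
      module
  · convert (Real.hasSum_sin t).smul_const X using 1
    ext k
    simp only [smul_pow, hodd, smul_smul]
    congr 1
    ring

end Rodrigues

section GivensGenerator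

variable {ι R : Type*} [DecidableEq ι] [Ring R] {i j : ι}

variable (R) in
def givensGen (i j : ι) : Matrix ι ι R := single i j 1 - single j i 1

theorem givensGen_transpose : (givensGen R i j)ᵀ = -givensGen R i j := by
  simp [givensGen]

variable [Fintype ι]

theorem givensGen_mulVec_single_left (hij : i ≠ j) :
    givensGen R i j *ᵥ Pi.single i 1 = -Pi.single j 1 := by
  ext p
  simp [givensGen, single_apply, Pi.single_apply, hij.symm, eq_comm]

theorem givensGen_mulVec_single_right (hij : i ≠ j) :
    givensGen R i j *ᵥ Pi.single j 1 = Pi.single i 1 := by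
  ext p
  simp [givensGen, single_apply, Pi.single_apply, hij, eq_comm]

theorem givensGen_mulVec_single_of_ne {k : ι} (hki : k ≠ i) (hkj : k ≠ j) :
    givensGen R i j *ᵥ Pi.single k 1 = 0 := by
  ext p
  simp [givensGen, hki.symm, hkj.symm]

theorem givensGen_pow_three (hij : i ≠ j) : givensGen R i j ^ 3 = -givensGen R i j := by
  refine ext_of_mulVec_single fun k => ?_
  rw [pow_three, ← mulVec_mulVec, ← mulVec_mulVec, neg_mulVec]
  rcases eq_or_ne k i with rfl | hki
  · simp only [givensGen_mulVec_single_left hij, givensGen_mulVec_single_right hij, mulVec_neg]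
  rcases eq_or_ne k j with rfl | hkj
  · simp only [givensGen_mulVec_single_left hij, givensGen_mulVec_single_right hij, mulVec_neg]
  simp only [givensGen_mulVec_single_of_ne hki hkj, mulVec_zero, neg_zero]

end GivensGenerator

theorem transpose_mul_mul_apply_self {ι R : Type*} [Fintype ι] [DecidableEq ι] [Semiring R]
    (G B : Matrix ι ι R) (k : ι) :
    (Gᵀ * B * G) k k = (G *ᵥ Pi.single k 1) ⬝ᵥ (B *ᵥ (G *ᵥ Pi.single k 1)) := by
  rw [mulVec_single_one]
  simp only [mul_apply, transpose_apply, dotProduct, mulVec, col_apply, Finset.sum_mul,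
    Finset.mul_sum, mul_assoc]
  exact Finset.sum_comm

section GivensRotation

variable {ι : Type*} [Fintype ι] [DecidableEq ι] {i j : ι}

noncomputable def givensRot (i j : ι) (t : ℝ) : Matrix ι ι ℝ :=
  NormedSpace.exp (t • givensGen ℝ i j)

theorem givensRot_eq (hij : i ≠ j) (t : ℝ) :
    givensRot i j t = 1 + sin t • givensGen ℝ i j + (1 - cos t) • givensGen ℝ i j ^ 2 :=
  -- any Banach-algebra norm on matrices will do; the operator norm is the one Mathlib scopes
  open scoped Norms.Operator in exp_smul_of_pow_three_eq_neg (givensGen_pow_three hij) t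

theorem givensRot_mulVec (hij : i ≠ j) (t : ℝ) (v : ι → ℝ) :
    givensRot i j t *ᵥ v
      = v + sin t • (givensGen ℝ i j *ᵥ v)
        + (1 - cos t) • (givensGen ℝ i j *ᵥ (givensGen ℝ i j *ᵥ v)) := by
  rw [givensRot_eq hij, add_mulVec, add_mulVec, one_mulVec, smul_mulVec, smul_mulVec, sq,
    mulVec_mulVec]

theorem givensRot_mulVec_single_left (hij : i ≠ j) (t : ℝ) :
    givensRot i j t *ᵥ Pi.single i 1
      = cos t • Pi.single i 1 - sin t • Pi.single j 1 := by
  rw [givensRot_mulVec hij, givensGen_mulVec_single_left hij, mulVec_neg,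
    givensGen_mulVec_single_right hij]
  module

theorem givensRot_mulVec_single_right (hij : i ≠ j) (t : ℝ) :
    givensRot i j t *ᵥ Pi.single j 1
      = sin t • Pi.single i 1 + cos t • Pi.single j 1 := by
  rw [givensRot_mulVec hij, givensGen_mulVec_single_right hij,
    givensGen_mulVec_single_left hij]
  module

theorem givensRot_mulVec_single_of_ne (hij : i ≠ j) {k : ι} (hki : k ≠ i) (hkj : k ≠ j)
    (t : ℝ) : givensRot i j t *ᵥ Pi.single k 1 = Pi.single k 1 := by
  rw [givensRot_mulVec hij, givensGen_mulVec_single_of_ne hki hkj, mulVec_zero]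
  module

theorem transpose_exp_mul_exp_of_transpose_eq_neg {X : Matrix ι ι ℝ} (hX : Xᵀ = -X) :
    (NormedSpace.exp X)ᵀ * NormedSpace.exp X = 1 := by
  rw [← Matrix.exp_transpose, hX, ← Matrix.exp_add_of_commute _ _ (Commute.refl X).neg_left,
    neg_add_cancel, NormedSpace.exp_zero]

theorem transpose_givensRot_mul_self (t : ℝ) :
    (givensRot i j t)ᵀ * givensRot i j t = 1 :=
  transpose_exp_mul_exp_of_transpose_eq_neg (by rw [transpose_smul, givensGen_transpose, smul_neg])

variable (B : Matrix ι ι ℝ)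

theorem diag_conj_givensRot_left (hij : i ≠ j) (t : ℝ) :
    ((givensRot i j t)ᵀ * B * givensRot i j t) i i
      = cos t ^ 2 * B i i - cos t * sin t * (B i j + B j i) + sin t ^ 2 * B j j := by
  rw [transpose_mul_mul_apply_self, givensRot_mulVec_single_left hij]
  simp only [mulVec_sub, mulVec_smul, mulVec_single_one, dotProduct_sub, dotProduct_smul,
    sub_dotProduct, smul_dotProduct, single_one_dotProduct, col_apply, smul_eq_mul]
  ring

theorem diag_conj_givensRot_right (hij : i ≠ j) (t : ℝ) :
    ((givensRot i j t)ᵀ * B * givensRot i j t) j j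
      = sin t ^ 2 * B i i + cos t * sin t * (B i j + B j i) + cos t ^ 2 * B j j := by
  rw [transpose_mul_mul_apply_self, givensRot_mulVec_single_right hij]
  simp only [mulVec_add, mulVec_smul, mulVec_single_one, dotProduct_add, dotProduct_smul,
    add_dotProduct, smul_dotProduct, single_one_dotProduct, col_apply, smul_eq_mul]
  ring

theorem diag_conj_givensRot_of_ne (hij : i ≠ j) {k : ι} (hki : k ≠ i) (hkj : k ≠ j)
    (t : ℝ) : ((givensRot i j t)ᵀ * B * givensRot i j t) k k = B k k := by
  rw [transpose_mul_mul_apply_self, givensRot_mulVec_single_of_ne hij hki hkj,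
    single_one_dotProduct, mulVec_single_one, col_apply]

theorem sum_diag_sq_conj_givensRot (hB : Bᵀ = B) (hij : i ≠ j) (hdeg : B i i = B j j)
    (t : ℝ) :
    ∑ k, ((givensRot i j t)ᵀ * B * givensRot i j t) k k ^ 2
      = ∑ k, B k k ^ 2 + 2 * B i j ^ 2 * sin (2 * t) ^ 2 := by
  have hji : B j i = B i j := congrFun (congrFun hB i) j
  rw [← sub_eq_iff_eq_add', ← Finset.sum_sub_distrib, Finset.sum_eq_add i j hij
      (fun k _ hk => by rw [diag_conj_givensRot_of_ne B hij hk.1 hk.2, sub_self])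
      (by simp) (by simp),
    diag_conj_givensRot_left B hij, diag_conj_givensRot_right B hij, hji, hdeg,
    sin_two_mul]
  linear_combination (2 * B j j ^ 2 * (sin t ^ 2 + cos t ^ 2 + 1)) * sin_sq_add_cos_sq t

end GivensRotation

section FrobeniusNorm

variable {n : ℕ}

theorem frobNorm_sq (X : Matrix (Fin n) (Fin n) ℝ) : frobNorm X ^ 2 = ∑ p, ∑ q, X p q ^ 2 :=
  sq_sqrt (by positivity)

theorem sum_sq_eq_trace_transpose_mul_self {ι : Type*} [Fintype ι] (X : Matrix ι ι ℝ) :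
    ∑ p, ∑ q, X p q ^ 2 = trace (Xᵀ * X) := by
  simp only [trace, diag, mul_apply, transpose_apply, ← sq]
  exact Finset.sum_comm

theorem frobNorm_conj_of_orthogonal {G : Matrix (Fin n) (Fin n) ℝ} (hG : Gᵀ * G = 1)
    (X : Matrix (Fin n) (Fin n) ℝ) : frobNorm (Gᵀ * X * G) = frobNorm X := by
  have hG' : G * Gᵀ = 1 := mul_eq_one_comm.mp hG
  have hconj : (Gᵀ * X * G)ᵀ * (Gᵀ * X * G) = Gᵀ * (Xᵀ * X) * G := by
    simp only [transpose_mul, transpose_transpose, Matrix.mul_assoc]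
    rw [← Matrix.mul_assoc G Gᵀ, hG', Matrix.one_mul]
  rw [frobNorm, frobNorm, sum_sq_eq_trace_transpose_mul_self, sum_sq_eq_trace_transpose_mul_self,
    hconj, trace_mul_cycle, hG', Matrix.one_mul]

theorem frobNorm_sub_diagPart_sq (X : Matrix (Fin n) (Fin n) ℝ) :
    frobNorm (X - diagPart X) ^ 2 = frobNorm X ^ 2 - ∑ k, X k k ^ 2 := by
  have hentry (p q : Fin n) :
      (X - diagPart X) p q ^ 2 = X p q ^ 2 - if p = q then X p p ^ 2 else 0 := by
    rcases eq_or_ne p q with rfl | hpq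
    · simp [diagPart]
    · simp [diagPart, hpq]
  simp only [frobNorm_sq, hentry, Finset.sum_sub_distrib, Finset.sum_ite_eq, Finset.mem_univ,
    if_true]

end FrobeniusNorm

section Objective

variable {n : ℕ} (Ce M : Matrix (Fin n) (Fin n) ℝ)

theorem objF_eq : objF Ce M = (frobNorm (rotA Ce M) ^ 2 - ∑ k, rotA Ce M k k ^ 2) / 2 := by
  rw [objF, frobNorm_sub_diagPart_sq]
  ring

theorem rotA_mul (G : Matrix (Fin n) (Fin n) ℝ) : rotA Ce (M * G) = Gᵀ * rotA Ce M * G := by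
  simp only [rotA, transpose_mul, Matrix.mul_assoc]

theorem rotA_transpose (hCe : Ceᵀ = Ce) : (rotA Ce M)ᵀ = rotA Ce M := by
  simp only [rotA, transpose_mul, transpose_transpose, hCe, Matrix.mul_assoc]

theorem objF_mul_givensRot (hCe : Ceᵀ = Ce) {i j : Fin n} (hij : i ≠ j)
    (hdeg : rotA Ce M i i = rotA Ce M j j) (t : ℝ) :
    objF Ce (M * givensRot i j t)
      = objF Ce M - rotA Ce M i j ^ 2 * sin (2 * t) ^ 2 := by
  rw [objF_eq, objF_eq, rotA_mul,
    frobNorm_conj_of_orthogonal (transpose_givensRot_mul_self t),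
    sum_diag_sq_conj_givensRot _ (rotA_transpose Ce M hCe) hij hdeg]
  ring

end Objective

theorem iteratedDeriv_two_const_sub_mul_sin_two_mul_sq (a b : ℝ) :
    iteratedDeriv 2 (fun t => a - b * sin (2 * t) ^ 2) 0 = -8 * b := by
  have hcos : (fun t => a - b * sin (2 * t) ^ 2) = fun t => a - b / 2 + b / 2 * cos (4 * t) := by
    funext t
    rw [sin_sq_eq_half_sub, show 2 * (2 * t) = 4 * t by ring]
    ring
  rw [hcos, iteratedDeriv_const_add two_pos, iteratedDeriv_const_mul_field,
    iteratedDeriv_comp_const_mul contDiff_cos]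
  have h : iteratedDeriv 2 cos = (-1) ^ 1 * cos := iteratedDeriv_even_cos 1
  norm_num [h]
  ring

theorem givens_escape_formula_general {n : ℕ}
    (Ce M : Matrix (Fin n) (Fin n) ℝ) (hCe : Ceᵀ = Ce)
    (i j : Fin n) (hij : i ≠ j)
    (hdeg : rotA Ce M i i = rotA Ce M j j) :
    (∀ t : ℝ,
      objF Ce (M * NormedSpace.exp
          (t • (Matrix.single i j (1 : ℝ) - Matrix.single j i (1 : ℝ))))
        = objF Ce M - rotA Ce M i j ^ 2 * Real.sin (2 * t) ^ 2) ∧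
    objF Ce (M * NormedSpace.exp
        ((π / 4) • (Matrix.single i j (1 : ℝ) - Matrix.single j i (1 : ℝ))))
      = objF Ce M - rotA Ce M i j ^ 2 ∧
    iteratedDeriv 2
      (fun t : ℝ => objF Ce (M * NormedSpace.exp
          (t • (Matrix.single i j (1 : ℝ) - Matrix.single j i (1 : ℝ))))) 0
      = -8 * rotA Ce M i j ^ 2 := by
  have hformula := objF_mul_givensRot Ce M hCe hij hdeg
  refine ⟨hformula, (hformula _).trans ?_, ?_⟩
  · rw [show 2 * (π / 4) = π / 2 by ring, sin_pi_div_two]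
    ring
  · convert iteratedDeriv_two_const_sub_mul_sin_two_mul_sq (objF Ce M) (rotA Ce M i j ^ 2) using 2
    exact funext hformula

/-- **Givens escape formula**: at a degenerate block (`A_ii = A_jj`, `b = A_ij`), along
the Givens geodesic `t ↦ M exp(tΞ)` with `Ξ = E_ij − E_ji`,
`f(M exp(tΞ)) = f(M) − b² sin²(2t)`; in particular `t = π/4` decreases `f` by exactly
`b²`, and the second derivative at `0` is `−8b²`. -/
theorem givens_escape_formula {n : ℕ} (hn : 2 ≤ n)
    (Ce M : Matrix (Fin n) (Fin n) ℝ) (hCe : Ceᵀ = Ce) (hM : Mᵀ * M = 1)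
    (i j : Fin n) (hij : i ≠ j)
    (hdeg : rotA Ce M i i = rotA Ce M j j) :
    (∀ t : ℝ,
      objF Ce (M * NormedSpace.exp
          (t • (Matrix.single i j (1 : ℝ) - Matrix.single j i (1 : ℝ))))
        = objF Ce M - rotA Ce M i j ^ 2 * Real.sin (2 * t) ^ 2) ∧
    objF Ce (M * NormedSpace.exp
        ((π / 4) • (Matrix.single i j (1 : ℝ) - Matrix.single j i (1 : ℝ))))
      = objF Ce M - rotA Ce M i j ^ 2 ∧
    iteratedDeriv 2
      (fun t : ℝ => objF Ce (M * NormedSpace.exp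
          (t • (Matrix.single i j (1 : ℝ) - Matrix.single j i (1 : ℝ))))) 0
      = -8 * rotA Ce M i j ^ 2 :=
  givens_escape_formula_general Ce M hCe i j hij hdeg
end
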